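/- Representation formula for axially harmonic functions: let U ⊆ ℍ be an axially symmetric open set and f : U → ℍ left slice hyperholomorphic. (i) For every q ∈ U∖ℝ, writing u = Re q, v = |Im q| and I_q = Im q/|Im q|, and for every I ∈ 𝕊: Df(q) = −(Im q)⁻¹·I_q·I·(f(u − I·v) − f(u + I·v)). (ii) For every u ∈ U ∩ ℝ and every I ∈ 𝕊: Df(u + I·v) tends to −2·(f|ℝ)′(u) as v → 0⁺, where (f|ℝ)′(u) is the derivative at u of the restriction of f to U ∩ ℝ. -/

import Mathlib

noncomputable section
open Quaternion
open scoped RealInnerProductSpace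

/-- The imaginary units of `ℍ`. -/
def e1 : ℍ[ℝ] := ⟨0, 1, 0, 0⟩
def e2 : ℍ[ℝ] := ⟨0, 0, 1, 0⟩
def e3 : ℍ[ℝ] := ⟨0, 0, 0, 1⟩

/-- The Cauchy–Fueter operator `Df = ∂₀f + e₁∂₁f + e₂∂₂f + e₃∂₃f`. -/
def CF (f : ℍ[ℝ] → ℍ[ℝ]) (q : ℍ[ℝ]) : ℍ[ℝ] :=
  fderiv ℝ f q 1 + e1 * fderiv ℝ f q e1 + e2 * fderiv ℝ f q e2 + e3 * fderiv ℝ f q e3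

/-- `U ⊆ ℍ` is axially symmetric. -/
def AxiallySymmetric (U : Set ℍ[ℝ]) : Prop :=
  ∀ (u v : ℝ) (I J : ℍ[ℝ]), I.re = 0 → ‖I‖ = 1 → J.re = 0 → ‖J‖ = 1 →
    (u : ℍ[ℝ]) + v • I ∈ U → (u : ℍ[ℝ]) + v • J ∈ U

/-- `f` is left slice hyperholomorphic on `U` with defining pair `(α, β)`. -/
structure IsSliceHyperholomorphic (U : Set ℍ[ℝ]) (f : ℍ[ℝ] → ℍ[ℝ])
    (α β : ℝ × ℝ → ℍ[ℝ]) : Prop where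
  contDiff_α : ContDiff ℝ 1 α
  contDiff_β : ContDiff ℝ 1 β
  even_α : ∀ u v : ℝ, α (u, -v) = α (u, v)
  odd_β : ∀ u v : ℝ, β (u, -v) = -β (u, v)
  CR₁ : ∀ u v : ℝ, fderiv ℝ α (u, v) (1, 0) - fderiv ℝ β (u, v) (0, 1) = 0
  CR₂ : ∀ u v : ℝ, fderiv ℝ α (u, v) (0, 1) + fderiv ℝ β (u, v) (1, 0) = 0
  rep : ∀ (u v : ℝ) (I : ℍ[ℝ]), I.re = 0 → ‖I‖ = 1 →
    (u : ℍ[ℝ]) + v • I ∈ U → f ((u : ℍ[ℝ]) + v • I) = α (u, v) + I * β (u, v)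

section RepAuxLemmas


@[simp] lemma e1_re : e1.re = 0 := rfl
@[simp] lemma e1_imI : e1.imI = 1 := rfl
@[simp] lemma e1_imJ : e1.imJ = 0 := rfl
@[simp] lemma e1_imK : e1.imK = 0 := rfl
@[simp] lemma e2_re : e2.re = 0 := rfl
@[simp] lemma e2_imI : e2.imI = 0 := rfl
@[simp] lemma e2_imJ : e2.imJ = 1 := rfl
@[simp] lemma e2_imK : e2.imK = 0 := rfl
@[simp] lemma e3_re : e3.re = 0 := rfl
@[simp] lemma e3_imI : e3.imI = 0 := rfl
@[simp] lemma e3_imJ : e3.imJ = 0 := rfl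
@[simp] lemma e3_imK : e3.imK = 1 := rfl
@[simp] lemma e1_im : e1.im = e1 := rfl
@[simp] lemma e2_im : e2.im = e2 := rfl
@[simp] lemma e3_im : e3.im = e3 := rfl

def imL : ℍ[ℝ] →L[ℝ] ℍ[ℝ] :=
  LinearMap.toContinuousLinearMap
  { toFun := Quaternion.im
    map_add' := fun a b => Quaternion.im_add a b
    map_smul' := fun r a => Quaternion.im_smul a r }

def reL : ℍ[ℝ] →L[ℝ] ℝ :=
  LinearMap.toContinuousLinearMap
  { toFun := QuaternionAlgebra.re
    map_add' := fun _ _ => rfl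
    map_smul' := fun _ _ => rfl }

@[simp] lemma imL_apply (a : ℍ[ℝ]) : imL a = a.im := rfl
@[simp] lemma reL_apply (a : ℍ[ℝ]) : reL a = a.re := rfl

lemma inner_quat (a b : ℍ[ℝ]) :
    (inner ℝ a b : ℝ) = a.re * b.re + a.imI * b.imI + a.imJ * b.imJ + a.imK * b.imK := by
  rw [Quaternion.inner_def]
  simp [Quaternion.re_mul]
  try ring

lemma hasFDerivAt_norm' {x : ℍ[ℝ]} (hx : x ≠ 0) :
    HasFDerivAt (fun y : ℍ[ℝ] => ‖y‖) (‖x‖⁻¹ • innerSL ℝ x) x := by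
  have h1 : HasFDerivAt (fun y : ℍ[ℝ] => ‖y‖ ^ 2) (2 • innerSL ℝ x) x :=
    (hasStrictFDerivAt_norm_sq x).hasFDerivAt
  have h2 : HasDerivAt Real.sqrt (1 / (2 * Real.sqrt (‖x‖ ^ 2))) (‖x‖ ^ 2) :=
    Real.hasDerivAt_sqrt (by simpa using norm_ne_zero_iff.mpr hx)
  have h3 := h2.comp_hasFDerivAt x h1
  rw [show Real.sqrt ∘ (fun y : ℍ[ℝ] => ‖y‖ ^ 2) = fun y : ℍ[ℝ] => ‖y‖ from
    funext fun y => Real.sqrt_sq (norm_nonneg y)] at h3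
  refine h3.congr_fderiv ?_
  rw [Real.sqrt_sq (norm_nonneg x)]
  ext w
  simp only [ContinuousLinearMap.coe_smul', Pi.smul_apply, ContinuousLinearMap.smul_apply,
    two_smul, smul_eq_mul, ContinuousLinearMap.add_apply]
  have : ‖x‖ ≠ 0 := norm_ne_zero_iff.mpr hx
  field_simp
  ring

lemma linmap_apply0 (T : ℝ × ℝ →L[ℝ] ℍ[ℝ]) (y : ℝ) : T (0, y) = y • T (0, 1) := by
  have h : ((0 : ℝ), y) = y • ((0 : ℝ), (1 : ℝ)) := by simp [Prod.ext_iff]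
  rw [h, map_smul]

lemma linmap_split (T : ℝ × ℝ →L[ℝ] ℍ[ℝ]) (x y : ℝ) :
    T (x, y) = x • T (1, 0) + y • T (0, 1) := by
  have h : (x, y) = x • ((1 : ℝ), (0 : ℝ)) + y • ((0 : ℝ), (1 : ℝ)) := by
    simp [Prod.ext_iff]
  rw [h, map_add, map_smul, map_smul]

theorem sliceKey {U : Set ℍ[ℝ]} (hUo : IsOpen U) {f : ℍ[ℝ] → ℍ[ℝ]} {α β : ℝ × ℝ → ℍ[ℝ]}
    (hs : IsSliceHyperholomorphic U f α β) {q : ℍ[ℝ]} (hq : q ∈ U) (hq' : q.im ≠ 0) :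
    CF f q = -((2 / ‖q.im‖) • β (q.re, ‖q.im‖)) := by
  have hvpos : 0 < ‖q.im‖ := norm_pos_iff.mpr hq'
  have hvne : ‖q.im‖ ≠ 0 := ne_of_gt hvpos
  set g : ℍ[ℝ] → ℍ[ℝ] :=
    fun p => α (reL p, ‖imL p‖) + (‖imL p‖⁻¹ • imL p) * β (reL p, ‖imL p‖) with hg_def
  have hfg : f =ᶠ[nhds q] g := by
    have hopen : IsOpen (U ∩ {p : ℍ[ℝ] | p.im ≠ 0}) := by
      refine hUo.inter ?_
      have : {p : ℍ[ℝ] | p.im ≠ 0} = imL ⁻¹' ({0}ᶜ) := rfl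
      rw [this]
      exact isOpen_compl_singleton.preimage imL.continuous
    filter_upwards [hopen.mem_nhds ⟨hq, hq'⟩] with p hp
    obtain ⟨hpU, hp'⟩ := hp
    have hpne : ‖p.im‖ ≠ 0 := norm_ne_zero_iff.mpr hp'
    have hre : (‖p.im‖⁻¹ • p.im).re = 0 := by
      simp [Quaternion.re_smul]
    have hnorm : ‖‖p.im‖⁻¹ • p.im‖ = 1 := by
      rw [norm_smul, Real.norm_eq_abs, abs_inv, abs_of_nonneg (norm_nonneg _)]
      field_simp
    have hmem : ((p.re : ℍ[ℝ]) + ‖p.im‖ • (‖p.im‖⁻¹ • p.im)) ∈ U := by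
      rwa [smul_inv_smul₀ hpne, Quaternion.re_add_im]
    have hrep := hs.rep p.re ‖p.im‖ _ hre hnorm hmem
    rw [smul_inv_smul₀ hpne, Quaternion.re_add_im] at hrep
    simpa [hg_def] using hrep
  have hα : HasFDerivAt α (fderiv ℝ α (q.re, ‖q.im‖)) (q.re, ‖q.im‖) :=
    ((hs.contDiff_α.differentiable one_ne_zero) _).hasFDerivAt
  have hβ : HasFDerivAt β (fderiv ℝ β (q.re, ‖q.im‖)) (q.re, ‖q.im‖) :=
    ((hs.contDiff_β.differentiable one_ne_zero) _).hasFDerivAt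
  have hN : HasFDerivAt (fun p : ℍ[ℝ] => ‖imL p‖) ((‖q.im‖⁻¹ • innerSL ℝ q.im).comp imL) q :=
    (hasFDerivAt_norm' hq').comp q imL.hasFDerivAt
  set NL : ℍ[ℝ] →L[ℝ] ℝ := (‖q.im‖⁻¹ • innerSL ℝ q.im).comp imL with hNL
  have hP : HasFDerivAt (fun p : ℍ[ℝ] => ((reL p : ℝ), ‖imL p‖)) (reL.prod NL) q :=
    HasFDerivAt.prodMk reL.hasFDerivAt hN
  have hA := hα.comp q hP
  have hInv : HasFDerivAt (fun p : ℍ[ℝ] => ‖imL p‖⁻¹) ((-(‖q.im‖ ^ 2)⁻¹ : ℝ) • NL) q :=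
    (hasDerivAt_inv hvne).comp_hasFDerivAt q hN
  have hS := hInv.smul imL.hasFDerivAt
  have hB := hβ.comp q hP
  have hM := hS.mul' hB
  have hgq : HasFDerivAt g _ q := hA.add hM
  have hfq : HasFDerivAt f _ q := hgq.congr_of_eventuallyEq hfg
  rw [show CF f q = fderiv ℝ f q 1 + e1 * fderiv ℝ f q e1 + e2 * fderiv ℝ f q e2
      + e3 * fderiv ℝ f q e3 from rfl, hfq.fderiv]
  simp only [ContinuousLinearMap.add_apply, ContinuousLinearMap.comp_apply,
    ContinuousLinearMap.prod_apply, ContinuousLinearMap.coe_smul', Pi.smul_apply,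
    ContinuousLinearMap.smul_apply, ContinuousLinearMap.smulRight_apply, innerSL_apply_apply,
    imL_apply, reL_apply, Quaternion.im_one, Quaternion.re_one, e1_im, e2_im, e3_im,
    e1_re, e2_re, e3_re, inner_quat, Quaternion.re_im, Quaternion.re_coe, hNL,
    e1_imI, e1_imJ, e1_imK, e2_imI, e2_imJ, e2_imK, e3_imI, e3_imJ, e3_imK,
    Function.comp, Pi.smul_apply', op_smul_eq_mul, smul_eq_mul, mul_zero, zero_mul, mul_one, add_zero,
    zero_add, smul_zero, zero_smul, Quaternion.re_zero, Quaternion.imI_zero,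
    Quaternion.imJ_zero, Quaternion.imK_zero, neg_zero]
  rw [linmap_apply0 (fderiv ℝ α (q.re, ‖q.im‖)) (‖q.im‖⁻¹ * q.im.imI),
    linmap_apply0 (fderiv ℝ β (q.re, ‖q.im‖)) (‖q.im‖⁻¹ * q.im.imI),
    linmap_apply0 (fderiv ℝ α (q.re, ‖q.im‖)) (‖q.im‖⁻¹ * q.im.imJ),
    linmap_apply0 (fderiv ℝ β (q.re, ‖q.im‖)) (‖q.im‖⁻¹ * q.im.imJ),
    linmap_apply0 (fderiv ℝ α (q.re, ‖q.im‖)) (‖q.im‖⁻¹ * q.im.imK),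
    linmap_apply0 (fderiv ℝ β (q.re, ‖q.im‖)) (‖q.im‖⁻¹ * q.im.imK)]
  have had : fderiv ℝ α (q.re, ‖q.im‖) (1, 0) = fderiv ℝ β (q.re, ‖q.im‖) (0, 1) :=
    sub_eq_zero.mp (hs.CR₁ q.re ‖q.im‖)
  have hbc : fderiv ℝ β (q.re, ‖q.im‖) (1, 0) = -fderiv ℝ α (q.re, ‖q.im‖) (0, 1) :=
    eq_neg_of_add_eq_zero_right (hs.CR₂ q.re ‖q.im‖)
  rw [hbc, ← had]
  have hx : q.im.imI ^ 2 + q.im.imJ ^ 2 + q.im.imK ^ 2 = ‖q.im‖ ^ 2 := by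
    have h1 : normSq q.im = ‖q.im‖ * ‖q.im‖ := normSq_eq_norm_mul_self _
    rw [Quaternion.normSq_def', Quaternion.re_im] at h1
    rw [sq]
    linear_combination h1
  have hQre : q.im.re = 0 := q.re_im
  generalize hQ : q.im = Q at hx hQre hvne ⊢
  generalize hA' : fderiv ℝ α (q.re, ‖Q‖) (1, 0) = a
  generalize hB' : fderiv ℝ α (q.re, ‖Q‖) (0, 1) = b
  generalize hBV : β (q.re, ‖Q‖) = bv
  have hvw : ‖Q‖ * ‖Q‖⁻¹ = 1 := mul_inv_cancel₀ hvne
  rw [div_eq_mul_inv, ← inv_pow]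
  generalize hW : ‖Q‖⁻¹ = w at hvw ⊢
  ext <;>
    simp only [Quaternion.re_add, Quaternion.imI_add, Quaternion.imJ_add, Quaternion.imK_add,
      Quaternion.re_mul, Quaternion.imI_mul, Quaternion.imJ_mul, Quaternion.imK_mul,
      Quaternion.re_smul, Quaternion.imI_smul, Quaternion.imJ_smul, Quaternion.imK_smul,
      Quaternion.re_neg, Quaternion.imI_neg, Quaternion.imJ_neg, Quaternion.imK_neg,
      e1_re, e1_imI, e1_imJ, e1_imK, e2_re, e2_imI, e2_imJ, e2_imK,
      e3_re, e3_imI, e3_imJ, e3_imK, hQre, smul_eq_mul]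
  · linear_combination (-(w ^ 2 * (a.re - w * bv.re))) * hx +
      (-((a.re - w * bv.re) * (1 + ‖Q‖ * w))) * hvw
  · linear_combination (-(w ^ 2 * (a.imI - w * bv.imI))) * hx +
      (-((a.imI - w * bv.imI) * (1 + ‖Q‖ * w))) * hvw
  · linear_combination (-(w ^ 2 * (a.imJ - w * bv.imJ))) * hx +
      (-((a.imJ - w * bv.imJ) * (1 + ‖Q‖ * w))) * hvw
  · linear_combination (-(w ^ 2 * (a.imK - w * bv.imK))) * hx +
      (-((a.imK - w * bv.imK) * (1 + ‖Q‖ * w))) * hvw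


end RepAuxLemmas

/-- Representation formula for axially harmonic functions `Df`. -/
theorem representation_formula_axially_harmonic (U : Set ℍ[ℝ])
    (hUo : IsOpen U) (hUs : AxiallySymmetric U)
    (f : ℍ[ℝ] → ℍ[ℝ]) (α β : ℝ × ℝ → ℍ[ℝ])
    (hslice : IsSliceHyperholomorphic U f α β) :
    (∀ q ∈ U, Quaternion.im q ≠ 0 → ∀ I : ℍ[ℝ], I.re = 0 → ‖I‖ = 1 →
      CF f q = -((Quaternion.im q)⁻¹ * ((‖Quaternion.im q‖)⁻¹ • Quaternion.im q) * I *
        (f ((q.re : ℍ[ℝ]) - ‖Quaternion.im q‖ • I) -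
          f ((q.re : ℍ[ℝ]) + ‖Quaternion.im q‖ • I)))) ∧
    (∀ u : ℝ, (u : ℍ[ℝ]) ∈ U → ∀ I : ℍ[ℝ], I.re = 0 → ‖I‖ = 1 →
      Filter.Tendsto (fun v : ℝ => CF f ((u : ℍ[ℝ]) + v • I))
        (nhdsWithin 0 (Set.Ioi 0))
        (nhds ((-2 : ℝ) • deriv (fun t : ℝ => f (t : ℍ[ℝ])) u))) := by
  constructor
  · intro q hq hq' I hIre hInorm
    have hvne : ‖q.im‖ ≠ 0 := norm_ne_zero_iff.mpr hq'
    have hIqre : (‖q.im‖⁻¹ • q.im).re = 0 := by simp [Quaternion.re_smul]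
    have hIqnorm : ‖‖q.im‖⁻¹ • q.im‖ = 1 := by
      rw [norm_smul, Real.norm_eq_abs, abs_inv, abs_of_nonneg (norm_nonneg _)]
      field_simp
    have hqU : ((q.re : ℍ[ℝ]) + ‖q.im‖ • (‖q.im‖⁻¹ • q.im)) ∈ U := by
      rwa [smul_inv_smul₀ hvne, Quaternion.re_add_im]
    have hmemp : ((q.re : ℍ[ℝ]) + ‖q.im‖ • I) ∈ U :=
      hUs q.re ‖q.im‖ _ I hIqre hIqnorm hIre hInorm hqU
    have hmemm : ((q.re : ℍ[ℝ]) + ‖q.im‖ • (-I)) ∈ U :=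
      hUs q.re ‖q.im‖ _ (-I) hIqre hIqnorm (by simp [hIre]) (by simp [hInorm]) hqU
    have hp := hslice.rep q.re ‖q.im‖ I hIre hInorm hmemp
    have hm := hslice.rep q.re (-‖q.im‖) I hIre hInorm
      (by rwa [neg_smul, ← smul_neg])
    rw [hslice.even_α, hslice.odd_β] at hm
    have harg : ((q.re : ℍ[ℝ]) - ‖q.im‖ • I) = (q.re : ℍ[ℝ]) + (-‖q.im‖) • I := by
      rw [neg_smul, sub_eq_add_neg]
    rw [sliceKey hUo hslice hq hq', harg, hm, hp]
    have h5 : q.im⁻¹ * (‖q.im‖⁻¹ • q.im) = (‖q.im‖⁻¹ : ℝ) • (1 : ℍ[ℝ]) := by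
      rw [mul_smul_comm, inv_mul_cancel₀ hq']
    rw [h5, div_eq_mul_inv]
    have hy : I.imI ^ 2 + I.imJ ^ 2 + I.imK ^ 2 = 1 := by
      have h1 : normSq I = ‖I‖ * ‖I‖ := normSq_eq_norm_mul_self _
      rw [Quaternion.normSq_def', hIre, hInorm] at h1
      linear_combination h1
    generalize hW : ‖q.im‖⁻¹ = w
    generalize hA' : α (q.re, ‖q.im‖) = A
    generalize hB' : β (q.re, ‖q.im‖) = B
    ext <;>
      simp only [Quaternion.re_add, Quaternion.imI_add, Quaternion.imJ_add, Quaternion.imK_add,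
        Quaternion.re_sub, Quaternion.imI_sub, Quaternion.imJ_sub, Quaternion.imK_sub,
        Quaternion.re_mul, Quaternion.imI_mul, Quaternion.imJ_mul, Quaternion.imK_mul,
        Quaternion.re_smul, Quaternion.imI_smul, Quaternion.imJ_smul, Quaternion.imK_smul,
        Quaternion.re_neg, Quaternion.imI_neg, Quaternion.imJ_neg, Quaternion.imK_neg,
        Quaternion.re_one, Quaternion.imI_one, Quaternion.imJ_one, Quaternion.imK_one,
        hIre, smul_eq_mul]
    · linear_combination (2 * w * B.re) * hy
    · linear_combination (2 * w * B.imI) * hy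
    · linear_combination (2 * w * B.imJ) * hy
    · linear_combination (2 * w * B.imK) * hy
  · intro u hu I hIre hInorm
    have hIim : I.im = I := by
      conv_rhs => rw [← I.re_add_im]
      rw [hIre]
      simp
    have hIne : I ≠ 0 := by
      intro h
      rw [h, norm_zero] at hInorm
      exact one_ne_zero hInorm.symm
    -- derivative of the restriction of f to ℝ
    have hβ0 : HasFDerivAt β (fderiv ℝ β (u, 0)) (u, 0) :=
      ((hslice.contDiff_β.differentiable one_ne_zero) _).hasFDerivAt
    have hα0 : HasFDerivAt α (fderiv ℝ α (u, 0)) (u, 0) :=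
      ((hslice.contDiff_α.differentiable one_ne_zero) _).hasFDerivAt
    have hβzero : ∀ t : ℝ, β (t, 0) = 0 := by
      intro t
      have h := hslice.odd_β t 0
      rw [neg_zero] at h
      have h2 : (2 : ℝ) • β (t, 0) = 0 := by
        rw [two_smul]
        nth_rewrite 1 [h]
        simp
      simpa using h2
    have hcoe : Continuous (fun t : ℝ => (t : ℍ[ℝ])) := by
      exact continuous_algebraMap ℝ ℍ[ℝ]
    have hfeq : (fun t : ℝ => f (t : ℍ[ℝ])) =ᶠ[nhds u] (fun t : ℝ => α (t, 0)) := by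
      have hev : ∀ᶠ t : ℝ in nhds u, (t : ℍ[ℝ]) ∈ U :=
        (hcoe.tendsto u).eventually (hUo.eventually_mem hu)
      filter_upwards [hev] with t ht
      have := hslice.rep t 0 I hIre hInorm (by simpa using ht)
      rw [zero_smul, add_zero] at this
      rw [this, hβzero, mul_zero, add_zero]
    have hcurve : HasDerivAt (fun t : ℝ => ((t, (0 : ℝ)) : ℝ × ℝ)) (1, 0) u :=
      HasDerivAt.prodMk (hasDerivAt_id u) (hasDerivAt_const u 0)
    have hd1 : HasDerivAt (fun t : ℝ => α (t, 0)) (fderiv ℝ α (u, 0) (1, 0)) u :=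
      hα0.comp_hasDerivAt u hcurve
    have hD : HasDerivAt (fun t : ℝ => f (t : ℍ[ℝ])) (fderiv ℝ α (u, 0) (1, 0)) u :=
      hd1.congr_of_eventuallyEq hfeq
    have hCR : fderiv ℝ α (u, 0) (1, 0) = fderiv ℝ β (u, 0) (0, 1) :=
      sub_eq_zero.mp (hslice.CR₁ u 0)
    -- slope limit
    have hcurve2 : HasDerivAt (fun t : ℝ => ((u, t) : ℝ × ℝ)) (0, 1) 0 :=
      HasDerivAt.prodMk (hasDerivAt_const 0 u) (hasDerivAt_id 0)
    have hβd : HasDerivAt (fun t : ℝ => β (u, t)) (fderiv ℝ β (u, 0) (0, 1)) 0 :=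
      hβ0.comp_hasDerivAt 0 hcurve2
    have hslope := hasDerivAt_iff_tendsto_slope.mp hβd
    have hslope' : Filter.Tendsto (slope (fun t : ℝ => β (u, t)) 0)
        (nhdsWithin 0 (Set.Ioi 0)) (nhds (fderiv ℝ β (u, 0) (0, 1))) :=
      hslope.mono_left (nhdsWithin_mono 0 (fun x hx => ne_of_gt hx))
    have htends : Filter.Tendsto
        (fun v : ℝ => (-2 : ℝ) • slope (fun t : ℝ => β (u, t)) 0 v)
        (nhdsWithin 0 (Set.Ioi 0)) (nhds ((-2 : ℝ) • fderiv ℝ β (u, 0) (0, 1))) :=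
      hslope'.const_smul _
    have hevmem : ∀ᶠ v : ℝ in nhdsWithin 0 (Set.Ioi 0), ((u : ℍ[ℝ]) + v • I) ∈ U := by
      apply eventually_nhdsWithin_of_eventually_nhds
      have hc : Continuous (fun v : ℝ => (u : ℍ[ℝ]) + v • I) :=
        continuous_const.add (continuous_id.smul continuous_const)
      have h0 : (u : ℍ[ℝ]) + (0 : ℝ) • I = (u : ℍ[ℝ]) := by simp
      have := (hc.tendsto 0).eventually (hUo.eventually_mem (by rwa [h0]))
      simpa using this
    have heq : ∀ᶠ v : ℝ in nhdsWithin 0 (Set.Ioi 0),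
        CF f ((u : ℍ[ℝ]) + v • I) =
          (-2 : ℝ) • slope (fun t : ℝ => β (u, t)) 0 v := by
      filter_upwards [hevmem, eventually_mem_nhdsWithin] with v hvU hvpos
      have hvpos' : (0 : ℝ) < v := hvpos
      have him : ((u : ℍ[ℝ]) + v • I).im = v • I := by
        rw [Quaternion.im_add, Quaternion.im_smul, hIim, Quaternion.im_coe, zero_add]
      have himne : ((u : ℍ[ℝ]) + v • I).im ≠ 0 := by
        rw [him]
        exact smul_ne_zero (ne_of_gt hvpos') hIne
      have hre : ((u : ℍ[ℝ]) + v • I).re = u := by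
        rw [Quaternion.re_add, Quaternion.re_smul, hIre, Quaternion.re_coe]
        simp
      have hnrm : ‖((u : ℍ[ℝ]) + v • I).im‖ = v := by
        rw [him, norm_smul, Real.norm_eq_abs, abs_of_pos hvpos', hInorm, mul_one]
      rw [sliceKey hUo hslice hvU himne, hre, hnrm]
      rw [slope_def_module, sub_zero, hβzero u, sub_zero, smul_smul, ← neg_smul]
      congr 1
      field_simp
    rw [show ((-2 : ℝ) • deriv (fun t : ℝ => f (t : ℍ[ℝ])) u)
        = (-2 : ℝ) • fderiv ℝ β (u, 0) (0, 1) by rw [hD.deriv, hCR]]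
    exact htends.congr' (Filter.EventuallyEq.symm heq)
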